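/- arXiv:2107.01433 — 3 statements merged into one kernel-verified Lean document; each statement's English description precedes it below -/
import Mathlib

section
/- Let η_1 ∈ (0, 1), let {x_n} ⊆ A, let {c_n} ⊂ (0, +∞), and for each n let V_n be a subgradient tuple at x_n. Suppose that for every n: x_{n+1} is a global minimiser of Q_{c_{n+1}}(·, x_n, V_n) over A; the function Γ(·, x_n, V_n) attains a global minimum over A, with minimal value Γ̂_n; and at least one of the following holds: (a) Γ(x_{n+1}, x_n, V_n) = 0, (b) Γ̂_n = φ(x_n) (i.e. x_n minimises Γ(·, x_n, V_n) over A), (c) Γ(x_{n+1}, x_n, V_n) − φ(x_n) ≤ η_1 (Γ̂_n − φ(x_n)). If in addition Σ_{n=0}^{∞} max{0, φ(x_{n+1}) − φ(x_n)} < +∞, then every limit point of the sequence {x_n} is either feasible for (P) or an infeasible critical point of the penalty term φ. -/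
open RealInnerProductSpace Finset Filter Topology

noncomputable section

/-- Euclidean space `ℝ^d`. -/
abbrev Euc (d : ℕ) := EuclideanSpace ℝ (Fin d)

/-- The (convex-analysis) subdifferential of `f` at `y`. -/
def subdiff {d : ℕ} (f : Euc d → ℝ) (y : Euc d) : Set (Euc d) :=
  {v | ∀ x, f y + ⟪v, x - y⟫ ≤ f x}

/-- The normal cone to `A` at `x`. -/
def normalCone {d : ℕ} (A : Set (Euc d)) (x : Euc d) : Set (Euc d) :=
  {v | ∀ y ∈ A, ⟪v, y - x⟫ ≤ 0}

/-- A subgradient tuple `V = (v₀, vᵢ (i ∈ I), vⱼ, wⱼ (j ∈ E))` at the point `y`: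
`v_k ∈ ∂h_k(y)` for `k ∈ {0} ∪ I ∪ E` and `w_j ∈ ∂g_j(y)` for `j ∈ E`. -/
structure SubgradTuple {d l p : ℕ} (h0 : Euc d → ℝ) (hI : Fin l → Euc d → ℝ)
    (gE hE : Fin p → Euc d → ℝ) (y : Euc d) : Type where
  v0 : Euc d
  vI : Fin l → Euc d
  vE : Fin p → Euc d
  wE : Fin p → Euc d
  v0_mem : v0 ∈ subdiff h0 y
  vI_mem : ∀ i, vI i ∈ subdiff (hI i) y
  vE_mem : ∀ j, vE j ∈ subdiff (hE j) y
  wE_mem : ∀ j, wE j ∈ subdiff (gE j) y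

variable {d l p : ℕ}

/-- The linearised infeasibility measure `Γ(x, y, V)`. -/
def Gam (gI : Fin l → Euc d → ℝ) {h0 : Euc d → ℝ} {hI : Fin l → Euc d → ℝ}
    {gE hE : Fin p → Euc d → ℝ} {y : Euc d}
    (V : SubgradTuple h0 hI gE hE y) (x : Euc d) : ℝ :=
  (∑ i, max (gI i x - hI i y - ⟪V.vI i, x - y⟫) 0)
  + ∑ j, max (gE j x - hE j y - ⟪V.vE j, x - y⟫)
      (hE j x - gE j y - ⟪V.wE j, x - y⟫)

/-- The convex majorant `Q_c(x, y, V)` of the penalty function. -/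
def Qfun (g0 : Euc d → ℝ) (gI : Fin l → Euc d → ℝ) {h0 : Euc d → ℝ}
    {hI : Fin l → Euc d → ℝ} {gE hE : Fin p → Euc d → ℝ} {y : Euc d}
    (V : SubgradTuple h0 hI gE hE y) (c : ℝ) (x : Euc d) : ℝ :=
  g0 x - ⟪V.v0, x - y⟫ + c * Gam gI V x

/-- The ℓ1 penalty term `φ`. -/
def phi (gI hI : Fin l → Euc d → ℝ) (gE hE : Fin p → Euc d → ℝ) (x : Euc d) : ℝ :=
  (∑ i, max (gI i x - hI i x) 0) + ∑ j, |gE j x - hE j x|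

/-- The ℓ1 penalty function `Φ_c = f₀ + c φ`. -/
def Phi (g0 h0 : Euc d → ℝ) (gI hI : Fin l → Euc d → ℝ) (gE hE : Fin p → Euc d → ℝ)
    (c : ℝ) (x : Euc d) : ℝ :=
  (g0 x - h0 x) + c * phi gI hI gE hE x

/-- Feasibility for the problem (P). -/
def Feasible (A : Set (Euc d)) (gI hI : Fin l → Euc d → ℝ)
    (gE hE : Fin p → Euc d → ℝ) (x : Euc d) : Prop :=
  x ∈ A ∧ (∀ i, gI i x - hI i x ≤ 0) ∧ (∀ j, gE j x - hE j x = 0)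

/-- Criticality for the problem (P) (Definition 1). -/
def IsCritical (A : Set (Euc d)) (g0 h0 : Euc d → ℝ) (gI hI : Fin l → Euc d → ℝ)
    (gE hE : Fin p → Euc d → ℝ) (x : Euc d) : Prop :=
  ∃ V : SubgradTuple h0 hI gE hE x, ∃ lam : Fin l → ℝ, ∃ mu1 mu2 : Fin p → ℝ,
    (∀ i, 0 ≤ lam i) ∧ (∀ j, 0 ≤ mu1 j) ∧ (∀ j, 0 ≤ mu2 j) ∧
    (∀ i, lam i * (gI i x - hI i x) = 0) ∧
    ∃ u0 ∈ subdiff g0 x, ∃ uI : Fin l → Euc d, (∀ i, uI i ∈ subdiff (gI i) x) ∧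
    ∃ uE : Fin p → Euc d, (∀ j, uE j ∈ subdiff (gE j) x) ∧
    ∃ zE : Fin p → Euc d, (∀ j, zE j ∈ subdiff (hE j) x) ∧
    ∃ ν ∈ normalCone A x,
      (0 : Euc d) = (u0 - V.v0) + (∑ i, lam i • (uI i - V.vI i))
        + (∑ j, mu1 j • (uE j - V.vE j)) - (∑ j, mu2 j • (V.wE j - zE j)) + ν

/-- Generalised criticality for the penalty parameter `c`. -/
def IsGenCritical (A : Set (Euc d)) (g0 h0 : Euc d → ℝ) (gI hI : Fin l → Euc d → ℝ)
    (gE hE : Fin p → Euc d → ℝ) (c : ℝ) (x : Euc d) : Prop :=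
  x ∈ A ∧ ∃ V : SubgradTuple h0 hI gE hE x, ∀ z ∈ A, Qfun g0 gI V c x ≤ Qfun g0 gI V c z

/-- Criticality for the penalty term `φ`. -/
def IsCriticalPen (A : Set (Euc d)) (h0 : Euc d → ℝ) (gI hI : Fin l → Euc d → ℝ)
    (gE hE : Fin p → Euc d → ℝ) (x : Euc d) : Prop :=
  x ∈ A ∧ ∃ V : SubgradTuple h0 hI gE hE x, ∀ z ∈ A, Gam gI V x ≤ Gam gI V z

/-- `F` is coercive on `A`. -/
def CoerciveOn {d : ℕ} (F : Euc d → ℝ) (A : Set (Euc d)) : Prop :=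
  ∀ u : ℕ → Euc d, (∀ n, u n ∈ A) → Tendsto (fun n => ‖u n‖) atTop atTop →
    Tendsto (fun n => F (u n)) atTop atTop

section Aux
open Metric
variable {d l p : ℕ}

lemma convexOn_univ_continuous {d : ℕ} {f : Euc d → ℝ} (hf : ConvexOn ℝ Set.univ f) :
    Continuous f := by
  rw [← continuousOn_univ]
  exact hf.continuousOn isOpen_univ

lemma subgrad_norm_bound {d : ℕ} {f : Euc d → ℝ} (hf : Continuous f) (xs : Euc d) :
    ∃ C : ℝ, ∀ y v, dist y xs ≤ 1 → v ∈ subdiff f y → ‖v‖ ≤ C := by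
  obtain ⟨M, hM⟩ := (isCompact_closedBall xs 2).exists_bound_of_continuousOn hf.continuousOn
  refine ⟨2 * M, fun y v hy hv => ?_⟩
  have hMnn : 0 ≤ M := le_trans (norm_nonneg _) (hM xs (by simp))
  rcases eq_or_ne v 0 with h0 | h0
  · simp [h0]; linarith
  · have hvy : ‖(‖v‖⁻¹ • v : Euc d)‖ = 1 := by
      rw [norm_smul, norm_inv, norm_norm, inv_mul_cancel₀ (norm_ne_zero_iff.2 h0)]
    have hmem : y + ‖v‖⁻¹ • v ∈ closedBall xs 2 := by
      rw [mem_closedBall]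
      calc dist (y + ‖v‖⁻¹ • v) xs ≤ dist (y + ‖v‖⁻¹ • v) y + dist y xs := dist_triangle _ _ _
        _ ≤ 1 + 1 := by
            refine add_le_add (le_of_eq ?_) hy
            rw [dist_eq_norm, add_sub_cancel_left, hvy]
        _ = 2 := by norm_num
    have hsub := hv (y + ‖v‖⁻¹ • v)
    have hin : ⟪v, (y + ‖v‖⁻¹ • v) - y⟫ = ‖v‖ := by
      rw [add_sub_cancel_left, real_inner_smul_right, real_inner_self_eq_norm_mul_norm]
      field_simp
    rw [hin] at hsub
    have h1 : |f (y + ‖v‖⁻¹ • v)| ≤ M := hM _ hmem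
    have h2 : |f y| ≤ M := hM _ (mem_closedBall.2 (by linarith))
    rw [abs_le] at h1 h2
    linarith [h1.2, h2.1]


lemma phi_nonneg (gI hI : Fin l → Euc d → ℝ) (gE hE : Fin p → Euc d → ℝ) (x : Euc d) :
    0 ≤ phi gI hI gE hE x :=
  add_nonneg (Finset.sum_nonneg fun i _ => le_max_right _ _)
    (Finset.sum_nonneg fun j _ => abs_nonneg _)

lemma phi_le_gam (gI : Fin l → Euc d → ℝ) {h0 : Euc d → ℝ} {hI : Fin l → Euc d → ℝ}
    {gE hE : Fin p → Euc d → ℝ} {y : Euc d} (V : SubgradTuple h0 hI gE hE y) (x : Euc d) :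
    phi gI hI gE hE x ≤ Gam gI V x := by
  unfold phi Gam
  refine add_le_add (Finset.sum_le_sum fun i _ => ?_) (Finset.sum_le_sum fun j _ => ?_)
  · exact max_le_max (by have := V.vI_mem i x; linarith) le_rfl
  · refine abs_le.2 ⟨?_, ?_⟩
    · have h1 := V.wE_mem j x
      have : -(max (gE j x - hE j y - ⟪V.vE j, x - y⟫) (hE j x - gE j y - ⟪V.wE j, x - y⟫))
          ≤ -(hE j x - gE j y - ⟪V.wE j, x - y⟫) := neg_le_neg (le_max_right _ _)
      linarith
    · have h1 := V.vE_mem j x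
      have : gE j x - hE j y - ⟪V.vE j, x - y⟫
          ≤ max (gE j x - hE j y - ⟪V.vE j, x - y⟫) (hE j x - gE j y - ⟪V.wE j, x - y⟫) :=
        le_max_left _ _
      linarith

lemma gam_self (gI : Fin l → Euc d → ℝ) {h0 : Euc d → ℝ} {hI : Fin l → Euc d → ℝ}
    {gE hE : Fin p → Euc d → ℝ} {y : Euc d} (V : SubgradTuple h0 hI gE hE y) :
    Gam gI V y = phi gI hI gE hE y := by
  unfold Gam phi
  congr 1
  · simp
  · refine Finset.sum_congr rfl fun j _ => ?_
    simp only [sub_self, inner_zero_right, sub_zero]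
    rw [abs_eq_max_neg, neg_sub]

lemma feasible_of_phi_eq_zero {A : Set (Euc d)} {gI hI : Fin l → Euc d → ℝ}
    {gE hE : Fin p → Euc d → ℝ} {xs : Euc d} (hxA : xs ∈ A)
    (h : phi gI hI gE hE xs = 0) : Feasible A gI hI gE hE xs := by
  unfold phi at h
  have hs1 : 0 ≤ ∑ i, max (gI i xs - hI i xs) 0 :=
    Finset.sum_nonneg fun i _ => le_max_right _ _
  have hs2 : 0 ≤ ∑ j, |gE j xs - hE j xs| :=
    Finset.sum_nonneg fun j _ => abs_nonneg _
  have h1 : (∑ i, max (gI i xs - hI i xs) 0) = 0 := by linarith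
  have h2 : (∑ j, |gE j xs - hE j xs|) = 0 := by linarith
  refine ⟨hxA, fun i => ?_, fun j => ?_⟩
  · have := (Finset.sum_eq_zero_iff_of_nonneg
      (fun i _ => le_max_right (gI i xs - hI i xs) 0)).1 h1 i (Finset.mem_univ i)
    have h2 : gI i xs - hI i xs ≤ max (gI i xs - hI i xs) 0 := le_max_left _ _
    linarith [h2.trans this.le]
  · have := (Finset.sum_eq_zero_iff_of_nonneg
      (fun j _ => abs_nonneg (gE j xs - hE j xs))).1 h2 j (Finset.mem_univ j)
    exact abs_eq_zero.1 this

lemma phi_continuous {gI hI : Fin l → Euc d → ℝ} {gE hE : Fin p → Euc d → ℝ}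
    (hgI : ∀ i, Continuous (gI i)) (hhI : ∀ i, Continuous (hI i))
    (hgE : ∀ j, Continuous (gE j)) (hhE : ∀ j, Continuous (hE j)) :
    Continuous (phi gI hI gE hE) := by
  unfold phi
  refine Continuous.add (continuous_finset_sum _ fun i _ => ?_)
    (continuous_finset_sum _ fun j _ => ?_)
  · exact ((hgI i).sub (hhI i)).max continuous_const
  · exact ((hgE j).sub (hhE j)).abs

lemma tendsto_aux {f : Euc d → ℝ} (hf : Continuous f) {y : ℕ → Euc d} {ys : Euc d}
    (hy : Tendsto y atTop (𝓝 ys)) {v : ℕ → Euc d} {vs : Euc d}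
    (hv : Tendsto v atTop (𝓝 vs)) (z : Euc d) :
    Tendsto (fun n => f (y n) + ⟪v n, z - y n⟫) atTop (𝓝 (f ys + ⟪vs, z - ys⟫)) :=
  ((hf.tendsto ys).comp hy).add (hv.inner (tendsto_const_nhds.sub hy))

lemma gam_tendsto (gI : Fin l → Euc d → ℝ) {h0 : Euc d → ℝ} {hI : Fin l → Euc d → ℝ}
    {gE hE : Fin p → Euc d → ℝ}
    (hhI : ∀ i, Continuous (hI i)) (hgE : ∀ j, Continuous (gE j))
    (hhE : ∀ j, Continuous (hE j))
    {y : ℕ → Euc d} {ys : Euc d} (hy : Tendsto y atTop (𝓝 ys))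
    (V : ∀ n, SubgradTuple h0 hI gE hE (y n)) (Vs : SubgradTuple h0 hI gE hE ys)
    (hvI : ∀ i, Tendsto (fun n => (V n).vI i) atTop (𝓝 (Vs.vI i)))
    (hvE : ∀ j, Tendsto (fun n => (V n).vE j) atTop (𝓝 (Vs.vE j)))
    (hwE : ∀ j, Tendsto (fun n => (V n).wE j) atTop (𝓝 (Vs.wE j)))
    (z : Euc d) :
    Tendsto (fun n => Gam gI (V n) z) atTop (𝓝 (Gam gI Vs z)) := by
  unfold Gam
  refine Tendsto.add (tendsto_finset_sum _ fun i _ => ?_)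
    (tendsto_finset_sum _ fun j _ => ?_)
  · refine Tendsto.max ?_ tendsto_const_nhds
    have h2 := tendsto_const_nhds (x := gI i z) (f := atTop (α := ℕ)) |>.sub
      (tendsto_aux (hhI i) hy (hvI i) z)
    simp only [sub_add_eq_sub_sub] at h2
    exact h2
  · refine Tendsto.max ?_ ?_
    · have h2 := tendsto_const_nhds (x := gE j z) (f := atTop (α := ℕ)) |>.sub
        (tendsto_aux (hhE j) hy (hvE j) z)
      simp only [sub_add_eq_sub_sub] at h2
      exact h2
    · have h2 := tendsto_const_nhds (x := hE j z) (f := atTop (α := ℕ)) |>.sub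
        (tendsto_aux (hgE j) hy (hwE j) z)
      simp only [sub_add_eq_sub_sub] at h2
      exact h2

end Aux

set_option maxHeartbeats 1000000 in
theorem stmt12 {d l p : ℕ} (A : Set (Euc d)) (g0 h0 : Euc d → ℝ)
    (gI hI : Fin l → Euc d → ℝ) (gE hE : Fin p → Euc d → ℝ)
    (hA : Convex ℝ A) (hAcl : IsClosed A) (hAne : A.Nonempty)
    (hg0 : ConvexOn ℝ Set.univ g0) (hh0 : ConvexOn ℝ Set.univ h0)
    (hgI : ∀ i, ConvexOn ℝ Set.univ (gI i)) (hhI : ∀ i, ConvexOn ℝ Set.univ (hI i))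
    (hgE : ∀ j, ConvexOn ℝ Set.univ (gE j)) (hhE : ∀ j, ConvexOn ℝ Set.univ (hE j))
    (η1 : ℝ) (hη0 : 0 < η1) (hη1 : η1 < 1)
    (x : ℕ → Euc d) (hxA : ∀ n, x n ∈ A) (c : ℕ → ℝ) (hc : ∀ n, 0 < c n)
    (V : (n : ℕ) → SubgradTuple h0 hI gE hE (x n))
    (hmin : ∀ n, ∀ z ∈ A,
      Qfun g0 gI (V n) (c (n + 1)) (x (n + 1)) ≤ Qfun g0 gI (V n) (c (n + 1)) z)
    (xhat : ℕ → Euc d) (hxhatA : ∀ n, xhat n ∈ A)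
    (hxhat : ∀ n, ∀ z ∈ A, Gam gI (V n) (xhat n) ≤ Gam gI (V n) z)
    (halt : ∀ n, Gam gI (V n) (x (n + 1)) = 0 ∨
      Gam gI (V n) (xhat n) = phi gI hI gE hE (x n) ∨
      Gam gI (V n) (x (n + 1)) - phi gI hI gE hE (x n) ≤
        η1 * (Gam gI (V n) (xhat n) - phi gI hI gE hE (x n)))
    (hsum : Summable (fun n => max 0 (phi gI hI gE hE (x (n + 1)) - phi gI hI gE hE (x n)))) :
    ∀ xs : Euc d, (∃ k : ℕ → ℕ, StrictMono k ∧ Tendsto (fun n => x (k n)) atTop (𝓝 xs)) →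
      Feasible A gI hI gE hE xs ∨
        (¬ Feasible A gI hI gE hE xs ∧ IsCriticalPen A h0 gI hI gE hE xs) := by
  intro xs hxs
  obtain ⟨k, hk, hkx⟩ := hxs
  have hh0c := convexOn_univ_continuous hh0
  have hgIc : ∀ i, Continuous (gI i) := fun i => convexOn_univ_continuous (hgI i)
  have hhIc : ∀ i, Continuous (hI i) := fun i => convexOn_univ_continuous (hhI i)
  have hgEc : ∀ j, Continuous (gE j) := fun j => convexOn_univ_continuous (hgE j)
  have hhEc : ∀ j, Continuous (hE j) := fun j => convexOn_univ_continuous (hhE j)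
  have hxsA : xs ∈ A := hAcl.mem_of_tendsto hkx (Filter.Eventually.of_forall fun n => hxA _)
  set φn : ℕ → ℝ := fun n => phi gI hI gE hE (x n) with hφndef
  -- φn converges to some L
  have hconv : ∃ L, Tendsto φn atTop (𝓝 L) := by
    set a : ℕ → ℝ := fun n => max 0 (φn (n + 1) - φn n) with hadef
    have hb : Tendsto (fun n => ∑ i ∈ Finset.range n, a i) atTop (𝓝 (∑' n, a n)) :=
      hsum.hasSum.tendsto_sum_nat
    have hanti : Antitone (fun n => φn n - ∑ i ∈ Finset.range n, a i) := by
      apply antitone_nat_of_succ_le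
      intro n
      have h1 : φn (n + 1) - φn n ≤ a n := le_max_right _ _
      rw [Finset.sum_range_succ]
      linarith
    have hbdd : BddBelow (Set.range fun n => φn n - ∑ i ∈ Finset.range n, a i) := by
      refine ⟨-∑' n, a n, ?_⟩
      rintro _ ⟨n, rfl⟩
      have h1 : ∑ i ∈ Finset.range n, a i ≤ ∑' n, a n :=
        hsum.sum_le_tsum _ (fun i _ => le_max_left _ _)
      have h2 : 0 ≤ φn n := phi_nonneg _ _ _ _ _
      simp only
      linarith
    have h3 := tendsto_atTop_ciInf hanti hbdd
    refine ⟨(⨅ i, φn i - ∑ i ∈ Finset.range i, a i) + ∑' n, a n, ?_⟩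
    have h4 := h3.add hb
    simpa using h4
  obtain ⟨L, hφL⟩ := hconv
  have hLxs : L = phi gI hI gE hE xs := by
    have h1 : Tendsto (fun n => φn (k n)) atTop (𝓝 L) := hφL.comp hk.tendsto_atTop
    have h2 : Tendsto (fun n => φn (k n)) atTop (𝓝 (phi gI hI gE hE xs)) :=
      ((phi_continuous hgIc hhIc hgEc hhEc).tendsto xs).comp hkx
    exact tendsto_nhds_unique h1 h2
  by_cases hS : {n : ℕ | Gam gI (V (k n)) (x (k n + 1)) = 0}.Infinite
  · -- infinitely many exact steps: limit is feasible
    left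
    have h1 : Tendsto (fun n => φn (k n + 1)) atTop (𝓝 L) :=
      hφL.comp ((tendsto_add_atTop_nat 1).comp hk.tendsto_atTop)
    have hfreq : ∃ᶠ n in atTop, φn (k n + 1) ∈ ({0} : Set ℝ) := by
      rw [Nat.frequently_atTop_iff_infinite]
      refine hS.mono fun n hn => ?_
      have h2 := phi_le_gam gI (V (k n)) (x (k n + 1))
      rw [Set.mem_setOf_eq] at hn
      rw [hn] at h2
      exact Set.mem_singleton_iff.2 (le_antisymm h2 (phi_nonneg _ _ _ _ _))
    have hL0 : L ∈ closure ({0} : Set ℝ) := mem_closure_of_frequently_of_tendsto hfreq h1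
    rw [closure_singleton, Set.mem_singleton_iff] at hL0
    exact feasible_of_phi_eq_zero hxsA (by rw [← hLxs, hL0])
  · -- eventually inexact: limit is a critical point of the penalty
    have hne : ∀ᶠ n in atTop, Gam gI (V (k n)) (x (k n + 1)) ≠ 0 := by
      rw [Set.not_infinite] at hS
      obtain ⟨N0, hN0⟩ := hS.bddAbove
      refine eventually_atTop.2 ⟨N0 + 1, fun n hn h0 => ?_⟩
      exact absurd (hN0 h0) (by omega)
    set Ghat : ℕ → ℝ := fun m => Gam gI (V m) (xhat m) with hGhatdef
    have hub : ∀ m, Ghat m - φn m ≤ 0 := by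
      intro m
      have h1 := hxhat m (x m) (hxA m)
      rw [gam_self] at h1
      simpa using sub_nonpos.2 h1
    have hdiff0 : Tendsto (fun m => φn (m + 1) - φn m) atTop (𝓝 0) := by
      have h1 := (hφL.comp (tendsto_add_atTop_nat 1)).sub hφL
      simpa using h1
    have hlb : Tendsto (fun n => min ((φn (k n + 1) - φn (k n)) / η1) 0) atTop (𝓝 0) := by
      have h1 : Tendsto (fun n => (φn (k n + 1) - φn (k n)) / η1) atTop (𝓝 0) := by
        have h2 := (hdiff0.comp hk.tendsto_atTop).div_const η1
        simpa using h2
      have h3 := h1.min (tendsto_const_nhds (x := (0 : ℝ)))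
      simpa using h3
    have hsq : Tendsto (fun n => Ghat (k n) - φn (k n)) atTop (𝓝 0) := by
      refine tendsto_of_tendsto_of_tendsto_of_le_of_le' hlb tendsto_const_nhds ?_
        (Filter.Eventually.of_forall fun n => hub (k n))
      filter_upwards [hne] with n hn
      rcases halt (k n) with h | h | h
      · exact absurd h hn
      · have h2 : Ghat (k n) - φn (k n) = 0 := by
          simp only [hGhatdef, hφndef, h, sub_self]
        rw [h2]
        exact min_le_right _ _
      · have h2 : φn (k n + 1) ≤ Gam gI (V (k n)) (x (k n + 1)) := phi_le_gam _ _ _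
        have h3 : φn (k n + 1) - φn (k n) ≤ (Ghat (k n) - φn (k n)) * η1 := by
          have := h
          simp only [hGhatdef, hφndef] at *
          nlinarith
        have h4 : (φn (k n + 1) - φn (k n)) / η1 ≤ Ghat (k n) - φn (k n) :=
          (div_le_iff₀ hη0).2 h3
        exact le_trans (min_le_left _ _) h4
    have hGk : Tendsto (fun n => Ghat (k n)) atTop (𝓝 (phi gI hI gE hE xs)) := by
      have h1 := hsq.add (hφL.comp hk.tendsto_atTop)
      rw [zero_add, hLxs] at h1
      simpa using h1
    have hev : ∀ᶠ n in atTop, dist (x (k n)) xs ≤ 1 := by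
      have h1 := hkx.eventually_mem (Metric.closedBall_mem_nhds xs one_pos)
      exact h1.mono fun n h => Metric.mem_closedBall.1 h
    obtain ⟨N, hN⟩ := eventually_atTop.1 hev
    set K : ℕ → ℕ := fun n => k (n + N) with hKdef
    have hKy : Tendsto (fun n => x (K n)) atTop (𝓝 xs) := hkx.comp (tendsto_add_atTop_nat N)
    have hKG : Tendsto (fun n => Ghat (K n)) atTop (𝓝 (phi gI hI gE hE xs)) :=
      hGk.comp (tendsto_add_atTop_nat N)
    have hKd : ∀ n, dist (x (K n)) xs ≤ 1 := fun n => hN (n + N) (by omega)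
    obtain ⟨C0, hC0⟩ := subgrad_norm_bound hh0c xs
    have h5 : ∀ i, ∃ C, ∀ y v, dist y xs ≤ 1 → v ∈ subdiff (hI i) y → ‖v‖ ≤ C :=
      fun i => subgrad_norm_bound (hhIc i) xs
    choose CI hCI using h5
    have h6 : ∀ j, ∃ C, ∀ y v, dist y xs ≤ 1 → v ∈ subdiff (hE j) y → ‖v‖ ≤ C :=
      fun j => subgrad_norm_bound (hhEc j) xs
    choose CE hCE using h6
    have h7 : ∀ j, ∃ C, ∀ y v, dist y xs ≤ 1 → v ∈ subdiff (gE j) y → ‖v‖ ≤ C :=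
      fun j => subgrad_norm_bound (hgEc j) xs
    choose CW hCW using h7
    have hscomp : IsCompact ((Metric.closedBall (0 : Euc d) C0) ×ˢ
        ((Set.univ.pi fun i => Metric.closedBall (0 : Euc d) (CI i)) ×ˢ
          ((Set.univ.pi fun j => Metric.closedBall (0 : Euc d) (CE j)) ×ˢ
            (Set.univ.pi fun j => Metric.closedBall (0 : Euc d) (CW j))))) :=
      (isCompact_closedBall _ _).prod
        ((isCompact_univ_pi fun _ => isCompact_closedBall _ _).prod
          ((isCompact_univ_pi fun _ => isCompact_closedBall _ _).prod
            (isCompact_univ_pi fun _ => isCompact_closedBall _ _)))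
    have hWmem : ∀ n, ((V (K n)).v0, (V (K n)).vI, (V (K n)).vE, (V (K n)).wE) ∈
        ((Metric.closedBall (0 : Euc d) C0) ×ˢ
        ((Set.univ.pi fun i => Metric.closedBall (0 : Euc d) (CI i)) ×ˢ
          ((Set.univ.pi fun j => Metric.closedBall (0 : Euc d) (CE j)) ×ˢ
            (Set.univ.pi fun j => Metric.closedBall (0 : Euc d) (CW j))))) := by
      intro n
      refine ⟨?_, ?_, ?_, ?_⟩
      · exact mem_closedBall_zero_iff.2 (hC0 _ _ (hKd n) ((V (K n)).v0_mem))
      · exact fun i _ => mem_closedBall_zero_iff.2 (hCI i _ _ (hKd n) ((V (K n)).vI_mem i))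
      · exact fun j _ => mem_closedBall_zero_iff.2 (hCE j _ _ (hKd n) ((V (K n)).vE_mem j))
      · exact fun j _ => mem_closedBall_zero_iff.2 (hCW j _ _ (hKd n) ((V (K n)).wE_mem j))
    obtain ⟨a, -, σ, hσ, hWσ⟩ := hscomp.tendsto_subseq hWmem
    have hy' : Tendsto (fun n => x (K (σ n))) atTop (𝓝 xs) := hKy.comp hσ.tendsto_atTop
    have hv0 : Tendsto (fun n => (V (K (σ n))).v0) atTop (𝓝 a.1) :=
      (continuous_fst.tendsto a).comp hWσ
    have hvI : ∀ i, Tendsto (fun n => (V (K (σ n))).vI i) atTop (𝓝 (a.2.1 i)) := fun i =>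
      (((continuous_apply i).comp (continuous_fst.comp continuous_snd)).tendsto a).comp hWσ
    have hvE : ∀ j, Tendsto (fun n => (V (K (σ n))).vE j) atTop (𝓝 (a.2.2.1 j)) := fun j =>
      (((continuous_apply j).comp
        (continuous_fst.comp (continuous_snd.comp continuous_snd))).tendsto a).comp hWσ
    have hwE : ∀ j, Tendsto (fun n => (V (K (σ n))).wE j) atTop (𝓝 (a.2.2.2 j)) := fun j =>
      (((continuous_apply j).comp
        (continuous_snd.comp (continuous_snd.comp continuous_snd))).tendsto a).comp hWσ
    have hVm : ∀ n, x (K (σ n)) = x (K (σ n)) := fun _ => rfl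
    refine (em (Feasible A gI hI gE hE xs)).imp id fun hF => ⟨hF, ?_⟩
    have hmem0 : a.1 ∈ subdiff h0 xs := by
      intro xx
      exact le_of_tendsto (tendsto_aux hh0c hy' hv0 xx)
        (Filter.Eventually.of_forall fun n => (V (K (σ n))).v0_mem xx)
    have hmemI : ∀ i, a.2.1 i ∈ subdiff (hI i) xs := by
      intro i xx
      exact le_of_tendsto (tendsto_aux (hhIc i) hy' (hvI i) xx)
        (Filter.Eventually.of_forall fun n => (V (K (σ n))).vI_mem i xx)
    have hmemE : ∀ j, a.2.2.1 j ∈ subdiff (hE j) xs := by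
      intro j xx
      exact le_of_tendsto (tendsto_aux (hhEc j) hy' (hvE j) xx)
        (Filter.Eventually.of_forall fun n => (V (K (σ n))).vE_mem j xx)
    have hmemW : ∀ j, a.2.2.2 j ∈ subdiff (gE j) xs := by
      intro j xx
      exact le_of_tendsto (tendsto_aux (hgEc j) hy' (hwE j) xx)
        (Filter.Eventually.of_forall fun n => (V (K (σ n))).wE_mem j xx)
    refine ⟨hxsA, ⟨a.1, a.2.1, a.2.2.1, a.2.2.2, hmem0, hmemI, hmemE, hmemW⟩,
      fun z hz => ?_⟩
    rw [gam_self]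
    have hGz : Tendsto (fun n => Gam gI (V (K (σ n))) z) atTop
        (𝓝 (Gam gI (⟨a.1, a.2.1, a.2.2.1, a.2.2.2, hmem0, hmemI, hmemE, hmemW⟩ :
          SubgradTuple h0 hI gE hE xs) z)) :=
      gam_tendsto gI hhIc hgEc hhEc hy' (fun n => V (K (σ n))) _ hvI hvE hwE z
    have hGh : Tendsto (fun n => Ghat (K (σ n))) atTop (𝓝 (phi gI hI gE hE xs)) :=
      hKG.comp hσ.tendsto_atTop
    exact le_of_tendsto_of_tendsto' hGh hGz fun n => hxhat (K (σ n)) z hz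
end
end

section
/- Let c > 0 be fixed, let {x_n} ⊆ A, for each n let V_n be a subgradient tuple at x_n, and suppose that for every n the point x_{n+1} is a global minimiser of Q_c(·, x_n, V_n) over A. If the penalty function Φ_c is bounded below on A, then the sequence {Φ_c(x_n)} is non-increasing and |Φ_c(x_{n+1}) − Φ_c(x_n)| → 0 as n → ∞. -/
/-! The subgradient inequalities make `Q_c(·, y, V) - h₀(y)` a majorant of `Φ_c` that touches it
at `y`, so every step of the scheme decreases `Φ_c` (majorisation–minimisation). A non-increasing
sequence that is bounded below converges, hence its consecutive differences tend to `0`. -/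

open RealInnerProductSpace Finset Filter Topology

noncomputable section

variable {d l p : ℕ}

section Majorization

variable {g0 h0 : Euc d → ℝ} {gI hI : Fin l → Euc d → ℝ} {gE hE : Fin p → Euc d → ℝ}
  {y : Euc d}

lemma phi_le_Gam (V : SubgradTuple h0 hI gE hE y) (x : Euc d) :
    phi gI hI gE hE x ≤ Gam gI V x := by
  unfold phi Gam
  refine add_le_add (sum_le_sum fun i _ => ?_) (sum_le_sum fun j _ => ?_)
  · exact max_le_max_right 0 (by linarith [V.vI_mem i x])
  · rw [abs_eq_max_neg, neg_sub]
    exact max_le_max (by linarith [V.vE_mem j x]) (by linarith [V.wE_mem j x])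

lemma Gam_self (V : SubgradTuple h0 hI gE hE y) : Gam gI V y = phi gI hI gE hE y := by
  simp only [Gam, phi, sub_self, inner_zero_right, sub_zero, abs_eq_max_neg, neg_sub]

lemma Phi_le_Qfun_sub (V : SubgradTuple h0 hI gE hE y) {c : ℝ} (hc : 0 ≤ c) (x : Euc d) :
    Phi g0 h0 gI hI gE hE c x ≤ Qfun g0 gI V c x - h0 y := by
  have hv0 := V.v0_mem x
  have hGam := mul_le_mul_of_nonneg_left (phi_le_Gam (gI := gI) V x) hc
  unfold Phi Qfun
  linarith

lemma Phi_self_eq_Qfun_sub (V : SubgradTuple h0 hI gE hE y) (c : ℝ) :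
    Phi g0 h0 gI hI gE hE c y = Qfun g0 gI V c y - h0 y := by
  simp only [Phi, Qfun, Gam_self, sub_self, inner_zero_right]
  ring

lemma Phi_le_of_Qfun_le (V : SubgradTuple h0 hI gE hE y) {c : ℝ} (hc : 0 ≤ c) {x : Euc d}
    (hQ : Qfun g0 gI V c x ≤ Qfun g0 gI V c y) :
    Phi g0 h0 gI hI gE hE c x ≤ Phi g0 h0 gI hI gE hE c y :=
  calc Phi g0 h0 gI hI gE hE c x ≤ Qfun g0 gI V c x - h0 y := Phi_le_Qfun_sub V hc x
    _ ≤ Qfun g0 gI V c y - h0 y := by linarith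
    _ = Phi g0 h0 gI hI gE hE c y := (Phi_self_eq_Qfun_sub V c).symm

end Majorization

lemma Antitone.tendsto_abs_sub_succ {u : ℕ → ℝ} (hu : Antitone u)
    (hbdd : BddBelow (Set.range u)) :
    Tendsto (fun n => |u (n + 1) - u n|) atTop (𝓝 0) := by
  have hlim := tendsto_atTop_ciInf hu hbdd
  simpa using ((hlim.comp (tendsto_add_atTop_nat 1)).sub hlim).abs

theorem stmt13_general {d l p : ℕ} (A : Set (Euc d)) (g0 h0 : Euc d → ℝ)
    (gI hI : Fin l → Euc d → ℝ) (gE hE : Fin p → Euc d → ℝ)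
    (c : ℝ) (hc : 0 < c)
    (x : ℕ → Euc d) (hxA : ∀ n, x n ∈ A)
    (V : (n : ℕ) → SubgradTuple h0 hI gE hE (x n))
    (hmin : ∀ n, ∀ z ∈ A, Qfun g0 gI (V n) c (x (n + 1)) ≤ Qfun g0 gI (V n) c z)
    (hbd : ∃ M : ℝ, ∀ z ∈ A, M ≤ Phi g0 h0 gI hI gE hE c z) :
    (∀ n, Phi g0 h0 gI hI gE hE c (x (n + 1)) ≤ Phi g0 h0 gI hI gE hE c (x n)) ∧
    Tendsto (fun n => |Phi g0 h0 gI hI gE hE c (x (n + 1)) - Phi g0 h0 gI hI gE hE c (x n)|)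
      atTop (𝓝 0) := by
  have hdecr : ∀ n, Phi g0 h0 gI hI gE hE c (x (n + 1)) ≤ Phi g0 h0 gI hI gE hE c (x n) :=
    fun n => Phi_le_of_Qfun_le (V n) hc.le (hmin n (x n) (hxA n))
  obtain ⟨M, hM⟩ := hbd
  have hbdd : BddBelow (Set.range fun n => Phi g0 h0 gI hI gE hE c (x n)) :=
    ⟨M, Set.forall_mem_range.2 fun n => hM (x n) (hxA n)⟩
  exact ⟨hdecr, (antitone_nat_of_succ_le hdecr).tendsto_abs_sub_succ hbdd⟩

theorem stmt13 {d l p : ℕ} (A : Set (Euc d)) (g0 h0 : Euc d → ℝ)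
    (gI hI : Fin l → Euc d → ℝ) (gE hE : Fin p → Euc d → ℝ)
    (hA : Convex ℝ A) (hAcl : IsClosed A) (hAne : A.Nonempty)
    (hg0 : ConvexOn ℝ Set.univ g0) (hh0 : ConvexOn ℝ Set.univ h0)
    (hgI : ∀ i, ConvexOn ℝ Set.univ (gI i)) (hhI : ∀ i, ConvexOn ℝ Set.univ (hI i))
    (hgE : ∀ j, ConvexOn ℝ Set.univ (gE j)) (hhE : ∀ j, ConvexOn ℝ Set.univ (hE j))
    (c : ℝ) (hc : 0 < c)
    (x : ℕ → Euc d) (hxA : ∀ n, x n ∈ A)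
    (V : (n : ℕ) → SubgradTuple h0 hI gE hE (x n))
    (hmin : ∀ n, ∀ z ∈ A, Qfun g0 gI (V n) c (x (n + 1)) ≤ Qfun g0 gI (V n) c z)
    (hbd : ∃ M : ℝ, ∀ z ∈ A, M ≤ Phi g0 h0 gI hI gE hE c z) :
    (∀ n, Phi g0 h0 gI hI gE hE c (x (n + 1)) ≤ Phi g0 h0 gI hI gE hE c (x n)) ∧
    Tendsto (fun n => |Phi g0 h0 gI hI gE hE c (x (n + 1)) - Phi g0 h0 gI hI gE hE c (x n)|)
      atTop (𝓝 0) :=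
  stmt13_general A g0 h0 gI hI gE hE c hc x hxA V hmin hbd
end
end

section
/- Suppose E = ∅ (there are no equality constraints). If a point x* ∈ A is infeasible for the problem (P), i.e. f_i(x*) > 0 for some i ∈ I, and linearised Slater's condition holds at x*, then x* is not a critical point of the penalty term φ. -/
/-!
At `x*` the linearisation is exact, so `Γ(x*, x*, V) = φ(x*) > 0` by infeasibility, whereas the
Slater point `y ∈ A` of the linearised constraints gives `Γ(y, x*, V) = 0`. Hence `x*` does not
minimise `Γ(·, x*, V)` over `A`, for any subgradient tuple `V`.
-/

open RealInnerProductSpace Finset Filter Topology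

noncomputable section

/-- The linearised infeasibility measure `Γ(x, y, V)` for the problem without equality
constraints. -/
def GamI {d l : ℕ} (gI hI : Fin l → Euc d → ℝ) (y : Euc d) (vI : Fin l → Euc d)
    (x : Euc d) : ℝ :=
  ∑ i, max (gI i x - hI i y - ⟪vI i, x - y⟫) 0

/-- `x` is a critical point of the penalty term `φ` (no equality constraints): there exists
a subgradient tuple `V = (v₀, v₁, …, v_ℓ)` at `x` such that `x` globally minimises
`Γ(·, x, V)` over `A`. -/
def IsCriticalPenI {d l : ℕ} (A : Set (Euc d)) (h0 : Euc d → ℝ)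
    (gI hI : Fin l → Euc d → ℝ) (x : Euc d) : Prop :=
  x ∈ A ∧ ∃ (v0 : Euc d) (vI : Fin l → Euc d), v0 ∈ subdiff h0 x ∧
    (∀ i, vI i ∈ subdiff (hI i) x) ∧
    ∀ z ∈ A, GamI gI hI x vI x ≤ GamI gI hI x vI z

theorem GamI_self {d l : ℕ} (gI hI : Fin l → Euc d → ℝ) (vI : Fin l → Euc d) (x : Euc d) :
    GamI gI hI x vI x = ∑ i, max (gI i x - hI i x) 0 := by
  simp only [GamI, sub_self, inner_zero_right, sub_zero]

theorem GamI_self_pos {d l : ℕ} {gI hI : Fin l → Euc d → ℝ} (vI : Fin l → Euc d) {x : Euc d}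
    (hinf : ∃ i, 0 < gI i x - hI i x) : 0 < GamI gI hI x vI x := by
  obtain ⟨i, hi⟩ := hinf
  rw [GamI_self]
  exact sum_pos' (fun j _ => le_max_right _ _) ⟨i, mem_univ i, lt_max_of_lt_left hi⟩

theorem GamI_eq_zero_of_nonpos {d l : ℕ} {gI hI : Fin l → Euc d → ℝ} {vI : Fin l → Euc d}
    {x y : Euc d} (hy : ∀ i, gI i y - hI i x - ⟪vI i, y - x⟫ ≤ 0) : GamI gI hI x vI y = 0 :=
  sum_eq_zero fun i _ => max_eq_right (hy i)

theorem stmt18_general {d l : ℕ} (A : Set (Euc d)) (h0 : Euc d → ℝ)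
    (gI hI : Fin l → Euc d → ℝ)
    (xs : Euc d)
    (hinf : ∃ i, 0 < gI i xs - hI i xs)
    (hslater : ∀ vI : Fin l → Euc d, (∀ i, vI i ∈ subdiff (hI i) xs) →
      ∃ y ∈ A, ∀ i, gI i y - hI i xs - ⟪vI i, y - xs⟫ < 0) :
    ¬ IsCriticalPenI A h0 gI hI xs := by
  rintro ⟨-, -, vI, -, hvI, hmin⟩
  obtain ⟨y, hyA, hy⟩ := hslater vI hvI
  have hmin_y := hmin y hyA
  rw [GamI_eq_zero_of_nonpos fun i => (hy i).le] at hmin_y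
  exact (GamI_self_pos vI hinf).not_ge hmin_y

/-- If `E = ∅`, `x*` ∈ A is infeasible for (P) and linearised Slater's condition holds at
`x*`, then `x*` is not a critical point of the penalty term `φ`. -/
theorem stmt18 {d l : ℕ} (A : Set (Euc d)) (g0 h0 : Euc d → ℝ)
    (gI hI : Fin l → Euc d → ℝ)
    (hA : Convex ℝ A) (hAcl : IsClosed A) (hAne : A.Nonempty)
    (hg0 : ConvexOn ℝ Set.univ g0) (hh0 : ConvexOn ℝ Set.univ h0)
    (hgI : ∀ i, ConvexOn ℝ Set.univ (gI i)) (hhI : ∀ i, ConvexOn ℝ Set.univ (hI i))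
    (xs : Euc d) (hxsA : xs ∈ A)
    (hinf : ∃ i, 0 < gI i xs - hI i xs)
    (hslater : ∀ vI : Fin l → Euc d, (∀ i, vI i ∈ subdiff (hI i) xs) →
      ∃ y ∈ A, ∀ i, gI i y - hI i xs - ⟪vI i, y - xs⟫ < 0) :
    ¬ IsCriticalPenI A h0 gI hI xs :=
  stmt18_general A h0 gI hI xs hinf hslater
end
end
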